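/- Under the structure semantics, for any Kripke structure S, state q, quantifier block Q, and QCTL formula φ: AG(Q.φ) holds at q if and only if ∀z.Q.( uniq(z) → AG(z → φ) ) holds at q, where z is fresh. -/
import Mathlib


/-- A block of propositional quantifiers (each binding one fresh atomic proposition). -/
inductive QBlock where
  | nil : QBlock
  | ex : QBlock → QBlock
  | all : QBlock → QBlock

/-- Structure semantics of a quantifier block applied to a matrix `φ` whose truth value
depends on the labellings (sets of states) chosen for the quantified propositions. -/
def QBlock.sat {Q : Type} : QBlock → (List (Set Q) → Q → Prop) → Q → Prop
  | .nil, φ, q => φ [] q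
  | .ex b, φ, q => ∃ Z : Set Q, b.sat (fun L => φ (Z :: L)) q
  | .all b, φ, q => ∀ Z : Set Q, b.sat (fun L => φ (Z :: L)) q

/-- Semantics of `uniq(z)` at `q` for the `z`-labelling `Z`. -/
def uniqSem {Q : Type} (R : Q → Q → Prop) (q : Q) (Z : Set Q) : Prop :=
  (∃ x, Relation.ReflTransGen R q x ∧ x ∈ Z) ∧
  ∀ Z' : Set Q, (∃ x, Relation.ReflTransGen R q x ∧ x ∈ Z ∧ x ∈ Z') →
    ∀ x, Relation.ReflTransGen R q x → x ∈ Z → x ∈ Z'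

lemma QBlock.sat_mono {Q : Type} (B : QBlock) :
    ∀ {ψ ψ' : List (Set Q) → Q → Prop} {u v : Q},
      (∀ L, ψ L u → ψ' L v) → B.sat ψ u → B.sat ψ' v := by
  induction B with
  | nil => intro ψ ψ' u v h hs; exact h [] hs
  | ex b ih => rintro ψ ψ' u v h ⟨Z, hZ⟩; exact ⟨Z, ih (fun L => h (Z :: L)) hZ⟩
  | all b ih => intro ψ ψ' u v h hs Z; exact ih (fun L => h (Z :: L)) (hs Z)

lemma QBlock.sat_true {Q : Type} (B : QBlock) (ψ : List (Set Q) → Q → Prop) (q : Q)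
    (h : ∀ L u, ψ L u) : B.sat ψ q := by
  induction B generalizing ψ with
  | nil => exact h [] q
  | ex b ih => exact ⟨∅, ih _ (fun L u => h _ u)⟩
  | all b ih => exact fun Z => ih _ (fun L u => h _ u)

/-- Structure semantics: `AG (Q.φ) ≡ ∀z.Q.(uniq(z) → AG(z → φ))` for a fresh `z`. -/
theorem AG_prenex {Q : Type} (R : Q → Q → Prop) (htotal : ∀ u, ∃ u', R u u')
    (q : Q) (B : QBlock) (φ : List (Set Q) → Q → Prop) :
    (∀ u, Relation.ReflTransGen R q u → B.sat φ u) ↔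
    ∀ Z : Set Q,
      B.sat (fun L u => uniqSem R u Z →
        ∀ u', Relation.ReflTransGen R u u' → u' ∈ Z → φ L u') q := by
  constructor
  · intro h Z
    by_cases hu : uniqSem R q Z
    · obtain ⟨⟨x₀, hx₀r, hx₀Z⟩, huniq⟩ := hu
      refine B.sat_mono (ψ := φ) (u := x₀) ?_ (h x₀ hx₀r)
      intro L hφ _ u' hu'r hu'Z
      have : u' ∈ ({x₀} : Set Q) :=
        huniq {x₀} ⟨x₀, hx₀r, hx₀Z, rfl⟩ u' hu'r hu'Z
      rw [Set.mem_singleton_iff] at this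
      rw [this]; exact hφ
    · refine B.sat_mono (ψ := fun _ _ => True) (u := q) ?_
        (B.sat_true _ q (fun _ _ => trivial))
      intro L _ hz
      exact absurd hz hu
  · intro h u hur
    have hZ := h {u}
    refine B.sat_mono ?_ hZ
    intro L hL
    refine hL ⟨⟨u, hur, rfl⟩, ?_⟩ u hur rfl
    rintro Z' ⟨x, hxr, rfl, hxZ'⟩ y hyr rfl
    exact hxZ'
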